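/- arXiv:0710.0116 — 4 statements merged into one kernel-verified Lean document; each statement's English description precedes it below -/
import Mathlib

section
/- Fix real numbers x > 0, b > 0 and c > 0. Then the limit as the real variable r → ∞ of r·log₂( 1 + x / (1 + b/(2^{c/r} − 1)) ) equals c·x/b. -/
/-!
With `D r = 2^{c/r} - 1` one has `r D → c log 2` (the derivative of `p ↦ 2^p` at `0`), so the
argument `u = x / (1 + b/D) = x D / (D + b)` of the logarithm satisfies `r u → x c log 2 / b`,
and `r log (1 + u)` has the same limit as `r u`.
-/

open Filter Topology Real

lemma tendsto_mul_rpow_div_sub_one {a c : ℝ} (ha : 0 < a) (hc : 0 < c) :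
    Tendsto (fun r : ℝ => r * (a ^ (c / r) - 1)) atTop (𝓝 (c * log a)) := by
  have hp : Tendsto (fun r : ℝ => c / r) atTop (𝓝[>] 0) := by
    refine (tendsto_inv_atTop_nhdsGT_zero.comp (tendsto_id.atTop_div_const hc)).congr fun r => ?_
    simp
  refine ((tendsto_rpow_sub_one_log ha).comp hp |>.const_mul c).congr fun r => ?_
  simp only [Function.comp_apply, inv_div, ← mul_assoc, mul_div_cancel₀ r hc.ne']

lemma tendsto_zero_of_tendsto_mul_atTop {f : ℝ → ℝ} {l : ℝ}
    (hf : Tendsto (fun r => r * f r) atTop (𝓝 l)) : Tendsto f atTop (𝓝 0) := by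
  have h := hf.mul tendsto_inv_atTop_zero
  rw [mul_zero] at h
  refine h.congr' ?_
  filter_upwards [eventually_ne_atTop 0] with r hr
  field_simp

lemma tendsto_mul_div_one_add_div {D : ℝ → ℝ} {l x b : ℝ} (hb : b ≠ 0)
    (hD : Tendsto (fun r => r * D r) atTop (𝓝 l)) (hD0 : ∀ᶠ r in atTop, D r ≠ 0) :
    Tendsto (fun r => r * (x / (1 + b / D r))) atTop (𝓝 (x * l / b)) := by
  have h := (hD.const_mul x).div ((tendsto_zero_of_tendsto_mul_atTop hD).add_const b)
    (by rwa [zero_add])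
  rw [zero_add] at h
  refine h.congr' ?_
  filter_upwards [hD0] with r hr
  simp only [Pi.div_apply]
  rw [one_add_div hr, div_div_eq_mul_div]
  ring

theorem elementary_compression_asymptotic_rate_general (x b c : ℝ) (hb : 0 < b)
    (hc : 0 < c) :
    Tendsto (fun r : ℝ =>
        r * Real.logb 2 (1 + x / (1 + b / ((2 : ℝ) ^ (c / r) - 1))))
      atTop (nhds (c * x / b)) := by
  have hnoise_ne : ∀ᶠ r : ℝ in atTop, (2 : ℝ) ^ (c / r) - 1 ≠ 0 := by
    filter_upwards [eventually_gt_atTop 0] with r hr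
    exact (sub_pos.2 (one_lt_rpow one_lt_two (div_pos hc hr))).ne'
  have hrate := tendsto_mul_log_one_add_of_tendsto
    (tendsto_mul_div_one_add_div (x := x) hb.ne' (tendsto_mul_rpow_div_sub_one two_pos hc)
      hnoise_ne)
  convert hrate.div_const (log 2) using 2 with r
  · rw [logb, mul_div_assoc]
  · field_simp [(log_pos one_lt_two).ne']

/-- Asymptotics of the elementary-compression rate with many agents:
`r·log₂(1 + x/(1 + b/(2^{c/r} − 1))) → c·x/b` as `r → ∞`. -/
theorem elementary_compression_asymptotic_rate (x b c : ℝ) (hx : 0 < x) (hb : 0 < b)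
    (hc : 0 < c) :
    Tendsto (fun r : ℝ =>
        r * Real.logb 2 (1 + x / (1 + b / ((2 : ℝ) ^ (c / r) - 1))))
      atTop (nhds (c * x / b)) :=
  elementary_compression_asymptotic_rate_general x b c hb hc
end

section
/- Let Δ₁, Δ₂, Δ₃, Δ₄ and θ be positive real numbers with c := Δ₁Δ₂/(Δ₃Δ₄) ≤ 1. Define G := (1 + 2θ) − √((1+2θ)² − 4θ(1+θ)·c), x₁ := Δ₄·G / (2Δ₂(1+θ)), x₂ := Δ₃·G / (2Δ₂(1+θ)), and Δ := Δ₁ + x₁x₂Δ₂ − x₁Δ₃ − x₂Δ₄. Then x₁·(Δ₃ − x₂Δ₂) = θ·Δ and x₂·(Δ₄ − x₁Δ₂) = θ·Δ. -/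
/-! With `c = Δ₁Δ₂/(Δ₃Δ₄)` and `u = G/(2(1+θ))`, the candidate point is `xᵢ = Δ_{5-i}·u/Δ₂`.
Multiplied by `Δ₂`, both stationarity equations become `Δ₃Δ₄` times
`u(1 - u) = θ(c - 2u + u²)`, i.e. `(1+θ)u² - (1+2θ)u + θc = 0`, and `u` is the smaller root
of this quadratic; `c ≤ 1` makes its discriminant at least `1`. -/

lemma smaller_root_isRoot {θ c : ℝ} (hθ : 1 + θ ≠ 0)
    (hdisc : 0 ≤ (1 + 2 * θ) ^ 2 - 4 * θ * (1 + θ) * c) :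
    let u := ((1 + 2 * θ) - √((1 + 2 * θ) ^ 2 - 4 * θ * (1 + θ) * c)) / (2 * (1 + θ))
    (1 + θ) * (u * u) + -(1 + 2 * θ) * u + θ * c = 0 := by
  intro u
  have hdiscrim : discrim (1 + θ) (-(1 + 2 * θ)) (θ * c) =
      √((1 + 2 * θ) ^ 2 - 4 * θ * (1 + θ) * c) * √((1 + 2 * θ) ^ 2 - 4 * θ * (1 + θ) * c) := by
    rw [Real.mul_self_sqrt hdisc, discrim]
    ring
  exact (quadratic_eq_zero_iff hθ hdiscrim u).2 (Or.inr (by rw [neg_neg]))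

lemma stationarity_of_isRoot {R : Type*} [CommRing R] [IsDomain R]
    {Δ₁ Δ₂ Δ₃ Δ₄ θ c u x₁ x₂ : R} (h₂ : Δ₂ ≠ 0) (hc : Δ₁ * Δ₂ = c * (Δ₃ * Δ₄))
    (hu : (1 + θ) * (u * u) + -(1 + 2 * θ) * u + θ * c = 0)
    (hx₁ : x₁ * Δ₂ = Δ₄ * u) (hx₂ : x₂ * Δ₂ = Δ₃ * u) :
    x₁ * (Δ₃ - x₂ * Δ₂) = θ * (Δ₁ + x₁ * x₂ * Δ₂ - x₁ * Δ₃ - x₂ * Δ₄) := by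
  refine mul_left_cancel₀ h₂ ?_
  linear_combination (-(Δ₃ * Δ₄)) * hu - θ * hc + (1 + θ) * (Δ₃ - x₂ * Δ₂) * hx₁
    + (θ * Δ₄ - (1 + θ) * Δ₄ * u) * hx₂

theorem kkt_stationarity_two_agents_general (Δ₁ Δ₂ Δ₃ Δ₄ θ : ℝ)
    (h₂ : 0 < Δ₂) (h₃ : 0 < Δ₃) (h₄ : 0 < Δ₄) (hθ : 0 < θ)
    (hc : Δ₁ * Δ₂ / (Δ₃ * Δ₄) ≤ 1) :
    let G := (1 + 2 * θ) -
      Real.sqrt ((1 + 2 * θ) ^ 2 - 4 * θ * (1 + θ) * (Δ₁ * Δ₂ / (Δ₃ * Δ₄)))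
    let x₁ := Δ₄ * G / (2 * Δ₂ * (1 + θ))
    let x₂ := Δ₃ * G / (2 * Δ₂ * (1 + θ))
    let Δ := Δ₁ + x₁ * x₂ * Δ₂ - x₁ * Δ₃ - x₂ * Δ₄
    x₁ * (Δ₃ - x₂ * Δ₂) = θ * Δ ∧ x₂ * (Δ₄ - x₁ * Δ₂) = θ * Δ := by
  intro G x₁ x₂ Δ
  have hθ₁ : 1 + θ ≠ 0 := by positivity
  have hdisc : 0 ≤ (1 + 2 * θ) ^ 2 - 4 * θ * (1 + θ) * (Δ₁ * Δ₂ / (Δ₃ * Δ₄)) := by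
    nlinarith [mul_le_mul_of_nonneg_left hc (by positivity : (0 : ℝ) ≤ 4 * θ * (1 + θ))]
  have hu := smaller_root_isRoot hθ₁ hdisc
  have hcΔ : Δ₁ * Δ₂ = Δ₁ * Δ₂ / (Δ₃ * Δ₄) * (Δ₃ * Δ₄) := by field_simp
  have hx₁ : x₁ * Δ₂ = Δ₄ * (G / (2 * (1 + θ))) := by simp only [x₁]; field_simp
  have hx₂ : x₂ * Δ₂ = Δ₃ * (G / (2 * (1 + θ))) := by simp only [x₂]; field_simp
  refine ⟨stationarity_of_isRoot h₂.ne' hcΔ hu hx₁ hx₂, ?_⟩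
  linear_combination
    stationarity_of_isRoot h₂.ne' (hcΔ.trans (by ring)) hu hx₂ hx₁

/-- KKT stationarity verification for the explicit two-agent CEO solution:
with `G = (1+2θ) − √((1+2θ)² − 4θ(1+θ)·Δ₁Δ₂/(Δ₃Δ₄))`, `x₁ = Δ₄G/(2Δ₂(1+θ))`,
`x₂ = Δ₃G/(2Δ₂(1+θ))` and `Δ = Δ₁ + x₁x₂Δ₂ − x₁Δ₃ − x₂Δ₄`, one has
`x₁(Δ₃ − x₂Δ₂) = θΔ` and `x₂(Δ₄ − x₁Δ₂) = θΔ`. -/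
theorem kkt_stationarity_two_agents (Δ₁ Δ₂ Δ₃ Δ₄ θ : ℝ)
    (h₁ : 0 < Δ₁) (h₂ : 0 < Δ₂) (h₃ : 0 < Δ₃) (h₄ : 0 < Δ₄) (hθ : 0 < θ)
    (hc : Δ₁ * Δ₂ / (Δ₃ * Δ₄) ≤ 1) :
    let G := (1 + 2 * θ) -
      Real.sqrt ((1 + 2 * θ) ^ 2 - 4 * θ * (1 + θ) * (Δ₁ * Δ₂ / (Δ₃ * Δ₄)))
    let x₁ := Δ₄ * G / (2 * Δ₂ * (1 + θ))
    let x₂ := Δ₃ * G / (2 * Δ₂ * (1 + θ))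
    let Δ := Δ₁ + x₁ * x₂ * Δ₂ - x₁ * Δ₃ - x₂ * Δ₄
    x₁ * (Δ₃ - x₂ * Δ₂) = θ * Δ ∧ x₂ * (Δ₄ - x₁ * Δ₂) = θ * Δ :=
  kkt_stationarity_two_agents_general Δ₁ Δ₂ Δ₃ Δ₄ θ h₂ h₃ h₄ hθ hc
end

section
/- Let H be an s×t complex matrix, Q a t×t complex matrix, and D an s×s complex matrix, and suppose that I_s + H·Q·H* is invertible (where A* denotes conjugate transpose). Then det( Q·H*·(I_s + HQH*)^{-1}·D·(I_s + HQH*)^{-1}·H·Q ) · ( det(I_s + HQH*) )² = det( Q·H*·D·H·Q ). -/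
open Matrix

/-!
If `B * Y = Y * A` and `A * Z = Z * C`, then `B * (Y A⁻¹ D A⁻¹ Z) * C = Y D Z`; for
`A = 1 + HQHᴴ`, the push-through identity supplies such `B = 1 + QHᴴH` and `C = 1 + HᴴHQ`,
and Sylvester's determinant identity gives `det B = det C = det A`.
-/

namespace Matrix

variable {m n R : Type*} [Fintype m] [Fintype n] [DecidableEq n]

theorem one_add_mul_mul_self [DecidableEq m] [Semiring R] (X : Matrix m n R) (Y : Matrix n m R) :
    (1 + X * Y) * X = X * (1 + Y * X) := by
  simp only [Matrix.add_mul, Matrix.mul_add, Matrix.one_mul, Matrix.mul_one, Matrix.mul_assoc]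

theorem mul_mul_nonsing_inv_mul_nonsing_inv_mul_mul [CommRing R] {A D : Matrix n n R}
    {B C : Matrix m m R} {Y : Matrix m n R} {Z : Matrix n m R} (hA : IsUnit A.det)
    (hY : B * Y = Y * A) (hZ : A * Z = Z * C) :
    B * (Y * A⁻¹ * D * A⁻¹ * Z) * C = Y * D * Z :=
  calc B * (Y * A⁻¹ * D * A⁻¹ * Z) * C = B * Y * A⁻¹ * D * (A⁻¹ * (Z * C)) := by
        simp only [Matrix.mul_assoc]
    _ = Y * D * Z := by
        rw [hY, ← hZ, mul_nonsing_inv_cancel_right _ _ hA, nonsing_inv_mul_cancel_left _ _ hA,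
          Matrix.mul_assoc]

theorem det_mul_nonsing_inv_mul_nonsing_inv_mul_mul [DecidableEq m] [CommRing R]
    {A D : Matrix n n R} {B C : Matrix m m R} {Y : Matrix m n R} {Z : Matrix n m R} (hA : IsUnit A.det)
    (hY : B * Y = Y * A) (hZ : A * Z = Z * C) :
    B.det * (Y * A⁻¹ * D * A⁻¹ * Z).det * C.det = (Y * D * Z).det := by
  rw [← det_mul, ← det_mul, mul_mul_nonsing_inv_mul_nonsing_inv_mul_mul hA hY hZ]

end Matrix

/-- Determinant push-through identity: for `H : s×t`, `Q : t×t`, `D : s×s` complex matrices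
with `I_s + HQH*` invertible,
`det(QH*(I+HQH*)⁻¹ D (I+HQH*)⁻¹ HQ) · det(I+HQH*)² = det(QH* D HQ)`. -/
theorem det_pushthrough_identity (s t : ℕ)
    (H : Matrix (Fin s) (Fin t) ℂ) (Q : Matrix (Fin t) (Fin t) ℂ)
    (D : Matrix (Fin s) (Fin s) ℂ) (h : IsUnit (1 + H * Q * Hᴴ).det) :
    (Q * Hᴴ * (1 + H * Q * Hᴴ)⁻¹ * D * (1 + H * Q * Hᴴ)⁻¹ * (H * Q)).det *
        ((1 + H * Q * Hᴴ).det) ^ 2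
      = (Q * Hᴴ * D * (H * Q)).det := by
  have hY : (1 + Q * Hᴴ * H) * (Q * Hᴴ) = Q * Hᴴ * (1 + H * Q * Hᴴ) := by
    rw [one_add_mul_mul_self, Matrix.mul_assoc H]
  have hB : (1 + Q * Hᴴ * H).det = (1 + H * Q * Hᴴ).det := by
    rw [det_one_add_mul_comm, Matrix.mul_assoc H]
  have hC : (1 + Hᴴ * (H * Q)).det = (1 + H * Q * Hᴴ).det := det_one_add_mul_comm _ _
  rw [← det_mul_nonsing_inv_mul_nonsing_inv_mul_mul h hY (one_add_mul_mul_self (H * Q) Hᴴ),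
    hB, hC]
  ring
end

section
/- Let M be an r×r Hermitian positive semidefinite complex matrix. For q ∈ ℝ^r with all coordinates nonnegative, the value det( I_r + diag(1 − 2^{−q₁}, …, 1 − 2^{−q_r}) · M ) is a positive real number, and the function q ↦ log det( I_r + diag(1 − 2^{−q_i})_{i=1..r} · M ) is concave on the set { q ∈ ℝ^r : q_i ≥ 0 for all i }. -/
/-!
Write `M = B* B`. By Sylvester's identity `det (1 + D M) = det (1 + B D B*)`, so the objective is
`g ∘ t`, where `tᵢ(q) = 1 - 2^{-qᵢ}` is concave with values in the nonnegative orthant and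
`g t = log det (1 + B diag(t) B*)`. On the orthant `g` is concave (log det is concave on positive
definite matrices, precomposed with an affine map) and nondecreasing (log det is monotone in the
Loewner order), and a nondecreasing concave function of a concave map is concave. Both properties
of log det come from simultaneous diagonalisation by congruence:
`det (a P + b Q) = det P * ∏ᵢ (a + b μᵢ)` with `μᵢ ≥ 0`.
-/

open Matrix ComplexOrder Set
open scoped MatrixOrder

theorem ConcaveOn.comp_of_mapsTo {𝕜 E β γ : Type*} [Semiring 𝕜] [PartialOrder 𝕜]
    [AddCommMonoid E] [AddCommMonoid β] [PartialOrder β] [AddCommMonoid γ] [PartialOrder γ]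
    [SMul 𝕜 E] [SMul 𝕜 β] [SMul 𝕜 γ] {s : Set E} {t : Set β} {f : E → β} {g : β → γ}
    (hg : ConcaveOn 𝕜 t g) (hf : ConcaveOn 𝕜 s f) (hfst : MapsTo f s t) (hg' : MonotoneOn g t) :
    ConcaveOn 𝕜 s (g ∘ f) :=
  ⟨hf.1, fun _ hx _ hy _ _ ha hb hab =>
    (hg.2 (hfst hx) (hfst hy) ha hb hab).trans <|
      hg' (hg.1 (hfst hx) (hfst hy) ha hb hab) (hfst <| hf.1 hx hy ha hb hab)
        (hf.2 hx hy ha hb hab)⟩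

namespace Matrix

variable {n 𝕜 : Type*} [RCLike 𝕜]

theorem convex_setOf_posDef : Convex ℝ {A : Matrix n n 𝕜 | A.PosDef} := by
  intro P hP Q hQ a b ha hb hab
  rcases ha.eq_or_lt with rfl | ha
  · rw [zero_add] at hab
    simpa [hab] using hQ
  · exact (hP.smul ha).add_posSemidef (hQ.posSemidef.smul hb)

variable [Fintype n] [DecidableEq n]

theorem IsHermitian.det_smul_one_add_smul {C : Matrix n n 𝕜} (hC : C.IsHermitian) (a b : ℝ) :
    (a • (1 : Matrix n n 𝕜) + b • C).det = ∏ i, ((a + b * hC.eigenvalues i : ℝ) : 𝕜) := by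
  set U : Matrix n n 𝕜 := (hC.eigenvectorUnitary : Matrix n n 𝕜)
  have hconj : a • 1 + b • C
      = U * (a • 1 + b • diagonal (RCLike.ofReal ∘ hC.eigenvalues)) * star U := by
    conv_lhs => rw [hC.spectral_theorem, Unitary.conjStarAlgAut_apply]
    simp [U, Matrix.mul_add, Matrix.add_mul]
  rw [hconj, det_mul_comm, ← Matrix.mul_assoc, Unitary.coe_star_mul_self, Matrix.one_mul,
    ← det_diagonal]
  congr 1
  ext i j
  by_cases h : i = j <;> simp [h, RCLike.real_smul_eq_coe_mul]

/-- The `μ i` are the eigenvalues of `P^{-1/2} Q P^{-1/2}`, which simultaneously diagonalises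
`P` (to `1`) and `Q` by congruence. -/
theorem PosDef.exists_det_smul_add_smul {P Q : Matrix n n 𝕜} (hP : P.PosDef)
    (hQ : Q.PosSemidef) : ∃ μ : n → ℝ, (∀ i, 0 ≤ μ i) ∧
      ∀ a b : ℝ, (a • P + b • Q).det = P.det * ((∏ i, (a + b * μ i) : ℝ) : 𝕜) := by
  set W := CFC.sqrt P
  have hW : IsUnit W := (IsStrictlyPositive.sqrt P hP.isStrictlyPositive).isUnit
  have hWW : W * W = P := CFC.sqrt_mul_sqrt_self P hP.posSemidef.nonneg
  have hWinv : (W⁻¹)ᴴ = W⁻¹ := (CFC.sqrt_nonneg P).posSemidef.isHermitian.inv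
  set C := W⁻¹ * Q * W⁻¹
  have hC : C.PosSemidef := by simpa [hWinv] using hQ.conjTranspose_mul_mul_same W⁻¹
  have hQC : Q = W * C * W := by
    have hWdet := (isUnit_iff_isUnit_det W).mp hW
    rw [Matrix.mul_assoc, Matrix.mul_assoc, nonsing_inv_mul _ hWdet, Matrix.mul_one,
      ← Matrix.mul_assoc, mul_nonsing_inv _ hWdet, Matrix.one_mul]
  refine ⟨hC.1.eigenvalues, hC.eigenvalues_nonneg, fun a b => ?_⟩
  have hcongr : a • P + b • Q = W * (a • 1 + b • C) * W := by
    rw [hQC, ← hWW]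
    simp only [Matrix.mul_add, Matrix.add_mul, Matrix.mul_smul, Matrix.smul_mul, Matrix.mul_one]
  rw [hcongr, det_mul, det_mul, hC.1.det_smul_one_add_smul, ← hWW, det_mul]
  push_cast
  ring

theorem PosDef.re_det_pos {A : Matrix n n 𝕜} (hA : A.PosDef) : 0 < RCLike.re A.det :=
  (RCLike.pos_iff.mp hA.det_pos).1

theorem PosDef.re_det_le_re_det_add {P Q : Matrix n n 𝕜} (hP : P.PosDef) (hQ : Q.PosSemidef) :
    RCLike.re P.det ≤ RCLike.re (P + Q).det := by
  obtain ⟨μ, hμ, hdet⟩ := hP.exists_det_smul_add_smul hQ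
  have h := congrArg RCLike.re (hdet 1 1)
  rw [one_smul, one_smul, RCLike.re_mul_ofReal] at h
  rw [h]
  refine le_mul_of_one_le_right hP.re_det_pos.le (Finset.one_le_prod fun i _ => ?_)
  linarith [hμ i]

theorem monotoneOn_log_re_det :
    MonotoneOn (fun A : Matrix n n 𝕜 => Real.log (RCLike.re A.det)) {A | A.PosDef} := by
  intro P hP Q hQ hPQ
  have h := (hP : P.PosDef).re_det_le_re_det_add (le_iff.mp hPQ)
  rw [add_sub_cancel] at h
  exact Real.log_le_log hP.re_det_pos h

theorem concaveOn_log_re_det :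
    ConcaveOn ℝ {A : Matrix n n 𝕜 | A.PosDef} (fun A => Real.log (RCLike.re A.det)) := by
  refine ⟨convex_setOf_posDef, fun P hP Q hQ a b ha hb hab => ?_⟩
  obtain ⟨μ, hμ, hdet⟩ :=
    (hP : P.PosDef).exists_det_smul_add_smul (hQ : Q.PosDef).posSemidef
  have hre : ∀ a b : ℝ, RCLike.re (a • P + b • Q).det = RCLike.re P.det * ∏ i, (a + b * μ i) :=
    fun a b => by rw [hdet, RCLike.re_mul_ofReal]
  have hQμ : RCLike.re Q.det = RCLike.re P.det * ∏ i, μ i := by simpa using hre 0 1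
  have hμ_pos : ∀ i, 0 < μ i := by
    have hprod : 0 < ∏ i, μ i := pos_of_mul_pos_right (hQμ ▸ hQ.re_det_pos) hP.re_det_pos.le
    exact fun i => (hμ i).lt_of_ne' (Finset.prod_ne_zero_iff.mp hprod.ne' i (Finset.mem_univ _))
  have hcomb_pos : ∀ i, 0 < a + b * μ i := fun i => by
    simpa using (convex_Ioi (0 : ℝ)) (mem_Ioi.mpr one_pos) (hμ_pos i) ha hb hab
  have hterm : ∀ i, b * Real.log (μ i) ≤ Real.log (a + b * μ i) := fun i => by
    simpa using
      strictConcaveOn_log_Ioi.concaveOn.2 (mem_Ioi.mpr one_pos) (hμ_pos i) ha hb hab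
  simp only [smul_eq_mul, hre, hQμ]
  rw [Real.log_mul hP.re_det_pos.ne' (Finset.prod_pos fun i _ => hμ_pos i).ne',
    Real.log_mul hP.re_det_pos.ne' (Finset.prod_pos fun i _ => hcomb_pos i).ne',
    Real.log_prod fun i _ => (hμ_pos i).ne', Real.log_prod fun i _ => (hcomb_pos i).ne']
  have hsum := Finset.sum_le_sum fun i (_ : i ∈ Finset.univ) => hterm i
  rw [← Finset.mul_sum] at hsum
  linear_combination hsum + Real.log (RCLike.re P.det) * hab

theorem posDef_one_add_mul_diagonal_mul_star (B : Matrix n n 𝕜) {t : n → ℝ} (ht : 0 ≤ t) :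
    (1 + B * diagonal (fun i => (t i : 𝕜)) * star B).PosDef :=
  PosDef.one.add_posSemidef <| (posSemidef_diagonal_iff.mpr fun i =>
    RCLike.ofReal_nonneg.mpr (ht i)).mul_mul_conjTranspose_same B

theorem concaveOn_log_re_det_one_add_mul_diagonal_mul_star (B : Matrix n n 𝕜) :
    ConcaveOn ℝ (Ici 0) fun t : n → ℝ =>
      Real.log (RCLike.re (1 + B * diagonal (fun i => (t i : 𝕜)) * star B).det) := by
  let F : (n → ℝ) →ᵃ[ℝ] Matrix n n 𝕜 := AffineMap.const ℝ _ 1 +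
    (LinearMap.mulRight ℝ (star B) ∘ₗ LinearMap.mulLeft ℝ B ∘ₗ diagonalLinearMap n ℝ 𝕜 ∘ₗ
      LinearMap.compLeft (Algebra.linearMap ℝ 𝕜) n).toAffineMap
  exact (concaveOn_log_re_det.comp_affineMap F).subset
    (fun t ht => posDef_one_add_mul_diagonal_mul_star B ht) (convex_Ici 0)

theorem monotoneOn_log_re_det_one_add_mul_diagonal_mul_star (B : Matrix n n 𝕜) :
    MonotoneOn (fun t : n → ℝ =>
      Real.log (RCLike.re (1 + B * diagonal (fun i => (t i : 𝕜)) * star B).det)) (Ici 0) := by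
  intro s hs t ht hst
  have hdiag : diagonal (fun i => (s i : 𝕜)) ≤ diagonal (fun i => (t i : 𝕜)) := by
    rw [le_iff, diagonal_sub]
    exact posSemidef_diagonal_iff.mpr fun i => by simpa using hst i
  exact monotoneOn_log_re_det (posDef_one_add_mul_diagonal_mul_star B hs)
    (posDef_one_add_mul_diagonal_mul_star B ht)
    (add_le_add_right (star_right_conjugate_le_conjugate hdiag B) 1)

end Matrix

theorem concaveOn_one_sub_two_rpow_neg :
    ConcaveOn ℝ univ fun x : ℝ => 1 - (2 : ℝ) ^ (-x) := by
  have h : ConvexOn ℝ univ fun x : ℝ => (2 : ℝ) ^ (-x) := by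
    simpa [Real.rpow_neg, ← Real.inv_rpow] using convexOn_rpow_left (b := 2⁻¹) (by norm_num)
  exact (concaveOn_const 1 convex_univ).sub h

theorem ConcaveOn.piMap {𝕜 α β ι : Type*} [Semiring 𝕜] [PartialOrder 𝕜]
    [AddCommMonoid α] [AddCommMonoid β] [PartialOrder β] [SMul 𝕜 α] [SMul 𝕜 β] {g : α → β}
    (hg : ConcaveOn 𝕜 univ g) {s : Set (ι → α)} (hs : Convex 𝕜 s) :
    ConcaveOn 𝕜 s fun q i => g (q i) :=
  ⟨hs, fun _ _ _ _ _ _ ha hb hab _ => hg.2 trivial trivial ha hb hab⟩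

/-- For an `r×r` Hermitian positive semidefinite complex matrix `M` and nonnegative
`q ∈ ℝ^r`, `det(I + diag(1 − 2^{−qᵢ})·M)` is a positive real number, and
`q ↦ log det(I + diag(1 − 2^{−qᵢ})·M)` is concave on the nonnegative orthant. -/
theorem logdet_concave_in_compression_parameters (r : ℕ)
    (M : Matrix (Fin r) (Fin r) ℂ) (hM : M.PosSemidef) :
    (∀ q : Fin r → ℝ, (∀ i, 0 ≤ q i) →
      0 < ((1 + Matrix.diagonal (fun i => ((1 - (2 : ℝ) ^ (-(q i)) : ℝ) : ℂ)) * M).det).re ∧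
      ((1 + Matrix.diagonal (fun i => ((1 - (2 : ℝ) ^ (-(q i)) : ℝ) : ℂ)) * M).det).im = 0) ∧
    ConcaveOn ℝ {q : Fin r → ℝ | ∀ i, 0 ≤ q i}
      (fun q => Real.log
        ((1 + Matrix.diagonal (fun i => ((1 - (2 : ℝ) ^ (-(q i)) : ℝ) : ℂ)) * M).det).re) := by
  obtain ⟨B, rfl⟩ := CStarAlgebra.nonneg_iff_eq_star_mul_self.mp hM.nonneg
  have hdet (t : Fin r → ℝ) : (1 + diagonal (fun i => (t i : ℂ)) * (star B * B)).det
      = (1 + B * diagonal (fun i => (t i : ℂ)) * star B).det := by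
    rw [← Matrix.mul_assoc, det_one_add_mul_comm, Matrix.mul_assoc]
  have hφ : MapsTo (fun (q : Fin r → ℝ) i => 1 - (2 : ℝ) ^ (-(q i))) (Ici 0) (Ici 0) :=
    fun q hq i => sub_nonneg.mpr
      (Real.rpow_le_one_of_one_le_of_nonpos one_le_two (neg_nonpos.mpr (hq i)))
  simp_rw [hdet]
  refine ⟨fun q hq =>
    RCLike.pos_iff.mp (posDef_one_add_mul_diagonal_mul_star B (hφ hq)).det_pos, ?_⟩
  exact (concaveOn_log_re_det_one_add_mul_diagonal_mul_star B).comp_of_mapsTo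
    (concaveOn_one_sub_two_rpow_neg.piMap (convex_Ici 0)) hφ
    (monotoneOn_log_re_det_one_add_mul_diagonal_mul_star B)
end
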